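/- Let F ⊊ H be graphs on {1,…,k} and e = {1,2} ∈ E(H) \ E(F). For every bipartite graph G₀ of density d, the (H,F)-coefficient of the semi-blowup G = H ⊙_e G₀ equals d/(a+bd), where a = n_F(H−e) ≥ 1 and b = n_F(H) − n_F(H−e) ≥ 0. -/

import Mathlib

open Finset

open scoped Classical

noncomputable section

/-- Number of (ordered) adjacent pairs between `S` and `T`. -/
def edgeCount {V : Type*} (G : SimpleGraph V) (S T : Finset V) : ℕ :=
  ((S ×ˢ T).filter fun p => G.Adj p.1 p.2).card

/-- Edge density of `G` between `S` and `T`. -/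
def density {V : Type*} (G : SimpleGraph V) (S T : Finset V) : ℝ :=
  (edgeCount G S T : ℝ) / ((S.card : ℝ) * (T.card : ℝ))

/-- `ε`-regularity (Szemerédi) of the bipartite graph induced by `G` between `V1` and `V2`. -/
def BipRegular {V : Type*} (G : SimpleGraph V) (V1 V2 : Finset V) (ε : ℝ) : Prop :=
  ∀ S ⊆ V1, ∀ T ⊆ V2, S.Nonempty → T.Nonempty →
    ε * (V1.card : ℝ) ≤ (S.card : ℝ) → ε * (V2.card : ℝ) ≤ (T.card : ℝ) →
    |density G S T - density G V1 V2| ≤ ε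

/-- Number of labeled copies of `F` in `G` with distinct vertices in distinct classes
`P 0, …, P (k-1)` (one vertex in each class, in any arrangement). -/
def labeledCount {k : ℕ} {V : Type*} (F : SimpleGraph (Fin k)) (G : SimpleGraph V)
    (P : Fin k → Finset V) : ℕ :=
  ∑ σ : Equiv.Perm (Fin k),
    ((Fintype.piFinset fun i => P (σ i)).filter
      fun v => ∀ i j, F.Adj i j → G.Adj (v i) (v j)).card

/-- Number of automorphisms of `F`. -/
def autCount {k : ℕ} (F : SimpleGraph (Fin k)) : ℕ :=
  labeledCount F F fun i => {i}

/-- Number `n_F(G)` of unlabeled copies of `F` in `G` with distinct vertices in distinct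
classes (one vertex per class). -/
def nCopies {k : ℕ} {V : Type*} (F : SimpleGraph (Fin k)) (G : SimpleGraph V)
    (P : Fin k → Finset V) : ℝ :=
  (labeledCount F G P : ℝ) / (autCount F : ℝ)

/-- The `(H,F)`-coefficient `c_{H,F}(G) = n_H(G)/n_F(G)` of the `k`-partite graph `G`
with classes `P`. -/
def coeff {k : ℕ} {V : Type*} (H F : SimpleGraph (Fin k)) (G : SimpleGraph V)
    (P : Fin k → Finset V) : ℝ :=
  nCopies H G P / nCopies F G P

/-- The `k`-partite graph `G` with classes `P` is `ε`-`(H,F)`-regular. -/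
def HFRegular {k : ℕ} {V : Type*} (H F : SimpleGraph (Fin k)) (G : SimpleGraph V)
    (P : Fin k → Finset V) (ε : ℝ) : Prop :=
  ∀ S : Fin k → Finset V, (∀ i, S i ⊆ P i) →
    ε * nCopies F G P ≤ nCopies F G S →
    |coeff H F G S - coeff H F G P| ≤ ε

/-- `G`, with classes `P`, is a blowup of `H`. -/
def IsBlowup {k : ℕ} {V : Type*} (G : SimpleGraph V) (H : SimpleGraph (Fin k))
    (P : Fin k → Finset V) : Prop :=
  (∀ i, (P i).Nonempty) ∧
  (∀ i j, i ≠ j → Disjoint (P i) (P j)) ∧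
  (∀ i, ∀ x ∈ P i, ∀ y ∈ P i, ¬ G.Adj x y) ∧
  (∀ i j, i ≠ j → ∀ x ∈ P i, ∀ y ∈ P j, (G.Adj x y ↔ H.Adj i j))

/-- `G`, with classes `P`, is a semi-blowup of `H` along the edge `{i₀, i₁} ∈ E(H)`:
between classes `P i, P j` with `{i,j} ≠ {i₀,i₁}` it is complete or empty bipartite
according to whether `{i,j} ∈ E(H)`, while between `P i₀` and `P i₁` the bipartite
graph (the graph `G₀`) is arbitrary. -/
def IsSemiBlowup {k : ℕ} {V : Type*} (G : SimpleGraph V) (H : SimpleGraph (Fin k))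
    (i₀ i₁ : Fin k) (P : Fin k → Finset V) : Prop :=
  i₀ ≠ i₁ ∧ H.Adj i₀ i₁ ∧
  (∀ i, (P i).Nonempty) ∧
  (∀ i j, i ≠ j → Disjoint (P i) (P j)) ∧
  (∀ i, ∀ x ∈ P i, ∀ y ∈ P i, ¬ G.Adj x y) ∧
  (∀ i j, ({i, j} : Finset (Fin k)) ≠ {i₀, i₁} → i ≠ j →
    ∀ x ∈ P i, ∀ y ∈ P j, (G.Adj x y ↔ H.Adj i j))

/-- Number of labeled copies of `H` anywhere in `G`. -/
def totalLabeled {k : ℕ} {V : Type*} [Fintype V] (H : SimpleGraph (Fin k))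
    (G : SimpleGraph V) : ℕ :=
  (Finset.univ.filter fun v : Fin k → V =>
    Function.Injective v ∧ ∀ i j, H.Adj i j → G.Adj (v i) (v j)).card

/-- Number `n_H(G)` of unlabeled copies of `H` anywhere in `G`. -/
def nCopiesTotal {k : ℕ} {V : Type*} [Fintype V] (H : SimpleGraph (Fin k))
    (G : SimpleGraph V) : ℝ :=
  (totalLabeled H G : ℝ) / (autCount H : ℝ)

/-- The vertex partition `Part` of `G` is `ε`-`(H,F)`-regular: all but at most
`ε·n_H(G)` copies of `H` in `G` lie in induced `k`-partite subgraphs spanned by `k`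
parts of `Part` that are `ε`-`(H,F)`-regular. (Each unlabeled copy lying in an injective
tuple of parts is counted `k!` times among ordered tuples, whence the `1/k!`.) -/
def HFRegularPartition {k : ℕ} {V : Type*} [Fintype V] (H F : SimpleGraph (Fin k))
    (G : SimpleGraph V) (Part : Finset (Finset V)) (ε : ℝ) : Prop :=
  nCopiesTotal H G - (Nat.factorial k : ℝ)⁻¹ *
      ∑ X ∈ (Fintype.piFinset fun _ : Fin k => Part).filter
          (fun X => Function.Injective X ∧ HFRegular H F G X ε),
        nCopies H G X
    ≤ ε * nCopiesTotal H G

/-- The partition `QPart` is a `δ`-regular (Szemerédi) partition of the bipartite graph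
induced by `G` between `V1` and `V2`. -/
def SzemerediPartition {V : Type*} (G : SimpleGraph V) (V1 V2 : Finset V)
    (QPart : Finset (Finset V)) (δ : ℝ) : Prop :=
  ∑ Y ∈ QPart, ∑ Y' ∈ QPart,
      (if Y ⊆ V1 ∧ Y' ⊆ V2 ∧ ¬ BipRegular G Y Y' δ
        then (Y.card : ℝ) * (Y'.card : ℝ) else 0)
    ≤ δ * ((V1.card : ℝ) * (V2.card : ℝ))

/-- `Part` is a partition of the finite set `U` (into nonempty parts). -/
def IsPartitionOn {V : Type*} (Part : Finset (Finset V)) (U : Finset V) : Prop :=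
  (∀ X ∈ Part, X.Nonempty) ∧ (∀ X ∈ Part, X ⊆ U) ∧
  (∀ x ∈ U, ∃! X, X ∈ Part ∧ x ∈ X)

/-- The tower function: `towerNat 0 = 1`, `towerNat (n+1) = 2 ^ towerNat n`. -/
def towerNat : ℕ → ℕ
  | 0 => 1
  | n + 1 => 2 ^ towerNat n

/-! Sort the labelled transversal copies of `K` in the semi-blowup by the permutation `σ` that
places them on the classes. If `σ` maps `K` into `H − e`, every transversal tuple is a copy; if
it maps `K` into `H` but uses `e`, the copies are the tuples that hit an edge of `G₀`; otherwise
there are none. Summing over `σ`,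
`n_K(G) = n_K(H−e)·|V₁|⋯|V_k| + (n_K(H) − n_K(H−e))·e(G₀)·∏_{i≠1,2}|V_i|`.
For `K = H` this is `e(G₀)·∏_{i≠1,2}|V_i|`, since `H` has no copy inside its proper subgraph
`H − e`, and for `K = F` it is `(a + bd)·|V₁|⋯|V_k|`. -/

open SimpleGraph

theorem piFinset_filter_eval_pair_eq {ι α : Type*} [Fintype ι] [DecidableEq ι]
    (Q : ι → Finset α) {a b : ι} (hab : a ≠ b) {x y : α} (hx : x ∈ Q a) (hy : y ∈ Q b) :
    {v ∈ Fintype.piFinset Q | (v a, v b) = (x, y)} =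
      Fintype.piFinset (Function.update (Function.update Q a {x}) b {y}) := by
  ext v
  simp only [mem_filter, Fintype.mem_piFinset, Prod.mk.injEq]
  rw [Function.forall_update_iff _ fun i s => v i ∈ s, mem_singleton]
  constructor
  · rintro ⟨hv, rfl, rfl⟩
    refine ⟨rfl, fun i hib => ?_⟩
    rcases eq_or_ne i a with rfl | hia
    · simp
    · simpa [hia] using hv i
  · rintro ⟨rfl, hv⟩
    have hva : v a = x := by simpa [hab] using hv a hab
    refine ⟨fun i => ?_, hva, rfl⟩
    rcases eq_or_ne i b with rfl | hib
    · exact hy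
    rcases eq_or_ne i a with rfl | hia
    · exact hva ▸ hx
    · simpa [hia] using hv i hib

theorem card_piFinset_filter_rel {ι α : Type*} [Fintype ι] [DecidableEq ι]
    (Q : ι → Finset α) {a b : ι} (hab : a ≠ b) (R : α → α → Prop) :
    #{v ∈ Fintype.piFinset Q | R (v a) (v b)} =
      #{p ∈ Q a ×ˢ Q b | R p.1 p.2} * ∏ i ∈ {a, b}ᶜ, #(Q i) := by
  rw [card_eq_sum_card_fiberwise (f := fun v => (v a, v b)) (t := {p ∈ Q a ×ˢ Q b | R p.1 p.2})
    fun v hv => by simp_all [Fintype.mem_piFinset], ← smul_eq_mul, ← sum_const]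
  refine sum_congr rfl fun ⟨x, y⟩ hp => ?_
  obtain ⟨⟨hx, hy⟩, hR⟩ : (x ∈ Q a ∧ y ∈ Q b) ∧ R x y := by simpa using hp
  have hfiber : ∀ v : ι → α, R (v a) (v b) ∧ (v a, v b) = (x, y) ↔ (v a, v b) = (x, y) :=
    fun v => and_iff_right_of_imp fun h => by rw [Prod.mk.injEq] at h; rwa [h.1, h.2]
  rw [filter_filter, filter_congr fun v _ => hfiber v, piFinset_filter_eval_pair_eq Q hab hx hy,
    Fintype.card_piFinset, ← prod_mul_prod_compl {a, b}, prod_pair hab]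
  simp only [Function.update_self, Function.update_of_ne hab, card_singleton, one_mul]
  exact prod_congr rfl fun i hi => by simp_all

theorem SimpleGraph.deleteEdges_singleton_lt {W : Type*} {G : SimpleGraph W} {u v : W}
    (h : G.Adj u v) : G.deleteEdges {s(u, v)} < G :=
  (deleteEdges_le _).lt_of_ne fun hG => by
    rw [← hG, deleteEdges_adj] at h
    exact h.2 rfl

theorem SimpleGraph.le_deleteEdges_singleton {W : Type*} {F G : SimpleGraph W} {u v : W}
    (hF : F ≤ G) (huv : ¬ F.Adj u v) : F ≤ G.deleteEdges {s(u, v)} := fun i j hij =>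
  deleteEdges_adj.2 ⟨hF hij, fun he => huv <| by
    rwa [← mem_edgeSet, ← Set.mem_singleton_iff.1 he]⟩

section Transversal

variable {k : ℕ} {V : Type*}

def homCount (K : SimpleGraph (Fin k)) (G : SimpleGraph V) (P : Fin k → Finset V) : ℕ :=
  #{v ∈ Fintype.piFinset P | ∀ i j, K.Adj i j → G.Adj (v i) (v j)}

theorem homCount_comp_perm (K : SimpleGraph (Fin k)) (G : SimpleGraph V)
    (P : Fin k → Finset V) (σ : Equiv.Perm (Fin k)) :
    homCount K G (fun i => P (σ i)) = homCount (K.comap σ.symm) G P := by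
  refine card_nbij' (fun v => v ∘ σ.symm) (fun w => w ∘ σ) ?_ ?_ ?_ ?_
  · intro v hv
    simp only [mem_coe, mem_filter, Fintype.mem_piFinset, Function.comp_apply,
      comap_adj] at hv ⊢
    exact ⟨fun i => by simpa using hv.1 (σ.symm i), fun i j h => hv.2 _ _ h⟩
  · intro w hw
    simp only [mem_coe, mem_filter, Fintype.mem_piFinset, Function.comp_apply,
      comap_adj] at hw ⊢
    exact ⟨fun i => hw.1 (σ i), fun i j h => hw.2 _ _ (by simpa using h)⟩
  · intro v _
    simp [Function.comp_def]
  · intro w _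
    simp [Function.comp_def]

theorem labeledCount_eq_sum_homCount (K : SimpleGraph (Fin k)) (G : SimpleGraph V)
    (P : Fin k → Finset V) :
    labeledCount K G P = ∑ σ : Equiv.Perm (Fin k), homCount (K.comap σ.symm) G P :=
  sum_congr rfl fun σ _ => homCount_comp_perm K G P σ

theorem homCount_singleton (K K' : SimpleGraph (Fin k)) :
    homCount K K' (fun i => {i}) = if K ≤ K' then 1 else 0 := by
  rw [homCount, show (Fintype.piFinset fun i : Fin k => ({i} : Finset (Fin k))) = {id} from
    Fintype.piFinset_singleton id, filter_singleton]
  split_ifs with h₁ h₂ h₂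
  · rfl
  · exact absurd (fun i j h => h₁ i j h) h₂
  · exact absurd (fun i j h => h₂ h) h₁
  · rfl

theorem labeledCount_singleton (K K' : SimpleGraph (Fin k)) :
    labeledCount K K' (fun i => {i}) = #{σ : Equiv.Perm (Fin k) | K.comap σ.symm ≤ K'} := by
  simp only [labeledCount_eq_sum_homCount, homCount_singleton, sum_boole, Nat.cast_id]

theorem autCount_pos (K : SimpleGraph (Fin k)) : 0 < autCount K := by
  rw [autCount, labeledCount_singleton]
  exact card_pos.2 ⟨Equiv.refl _, by simp⟩

theorem labeledCount_mono {K' K'' : SimpleGraph V} (K : SimpleGraph (Fin k)) (h : K' ≤ K'')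
    (P : Fin k → Finset V) : labeledCount K K' P ≤ labeledCount K K'' P :=
  sum_le_sum fun _ _ => card_le_card <| monotone_filter_right _ fun _ _ hv i j hK => h (hv i j hK)

theorem nCopies_mono {K' K'' : SimpleGraph V} (K : SimpleGraph (Fin k)) (h : K' ≤ K'')
    (P : Fin k → Finset V) : nCopies K K' P ≤ nCopies K K'' P :=
  div_le_div_of_nonneg_right (by exact_mod_cast labeledCount_mono K h P) (Nat.cast_nonneg _)

theorem nCopies_self (K : SimpleGraph (Fin k)) : nCopies K K (fun i => {i}) = 1 :=
  div_self (Nat.cast_ne_zero.2 (autCount_pos K).ne')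

theorem not_comap_le_of_lt {W : Type*} [Fintype W] {K K' : SimpleGraph W} (h : K' < K)
    (σ : W ≃ W) : ¬ K.comap σ ≤ K' := by
  intro hle
  have := (Iso.comap σ K).card_edgeFinset_eq
  have := card_le_card (edgeFinset_mono hle)
  have := card_lt_card (edgeFinset_ssubset_edgeFinset.2 h)
  omega

theorem nCopies_eq_zero_of_lt {K K' : SimpleGraph (Fin k)} (h : K' < K) :
    nCopies K K' (fun i => {i}) = 0 := by
  rw [nCopies, labeledCount_singleton, filter_false_of_mem fun σ _ => not_comap_le_of_lt h σ.symm]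
  simp

end Transversal

namespace IsSemiBlowup

variable {k : ℕ} {V : Type*} {G : SimpleGraph V} {H K : SimpleGraph (Fin k)} {i₀ i₁ : Fin k}
  {P : Fin k → Finset V}

theorem adj_iff (hsb : IsSemiBlowup G H i₀ i₁ P) {i j : Fin k} (hij : i ≠ j)
    (he : s(i, j) ≠ s(i₀, i₁)) {x y : V} (hx : x ∈ P i) (hy : y ∈ P j) :
    G.Adj x y ↔ H.Adj i j := by
  refine hsb.2.2.2.2.2 i j ?_ hij x hx y hy
  rwa [Ne, ← coe_inj, coe_pair, coe_pair, Set.pair_eq_pair_iff, ← Sym2.eq_iff]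

theorem le_of_isHom (hsb : IsSemiBlowup G H i₀ i₁ P) {v : Fin k → V}
    (hv : v ∈ Fintype.piFinset P) (hom : ∀ i j, K.Adj i j → G.Adj (v i) (v j)) : K ≤ H := by
  rw [Fintype.mem_piFinset] at hv
  intro i j hK
  have hij : i ≠ j := by
    rintro rfl
    exact hsb.2.2.2.2.1 i _ (hv i) _ (hv i) (hom i i hK)
  by_cases he : s(i, j) = s(i₀, i₁)
  · rw [← mem_edgeSet, he]
    exact hsb.2.1
  · exact (hsb.adj_iff hij he (hv i) (hv j)).1 (hom i j hK)

theorem isHom_of_le_deleteEdges (hsb : IsSemiBlowup G H i₀ i₁ P)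
    (hK : K ≤ H.deleteEdges {s(i₀, i₁)}) {v : Fin k → V} (hv : v ∈ Fintype.piFinset P) :
    ∀ i j, K.Adj i j → G.Adj (v i) (v j) := by
  rw [Fintype.mem_piFinset] at hv
  intro i j hKij
  obtain ⟨hH, he⟩ := deleteEdges_adj.1 (hK hKij)
  exact (hsb.adj_iff hH.ne he (hv i) (hv j)).2 hH

theorem isHom_iff (hsb : IsSemiBlowup G H i₀ i₁ P) (hK : K ≤ H) (he : K.Adj i₀ i₁)
    {v : Fin k → V} (hv : v ∈ Fintype.piFinset P) :
    (∀ i j, K.Adj i j → G.Adj (v i) (v j)) ↔ G.Adj (v i₀) (v i₁) := by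
  rw [Fintype.mem_piFinset] at hv
  refine ⟨fun hom => hom i₀ i₁ he, fun h i j hKij => ?_⟩
  by_cases hije : s(i, j) = s(i₀, i₁)
  · rcases Sym2.eq_iff.1 hije with ⟨rfl, rfl⟩ | ⟨rfl, rfl⟩
    exacts [h, h.symm]
  · exact (hsb.adj_iff (hK hKij).ne hije (hv i) (hv j)).2 (hK hKij)

theorem homCount_eq (hsb : IsSemiBlowup G H i₀ i₁ P) (K : SimpleGraph (Fin k)) :
    homCount K G P =
      if K ≤ H.deleteEdges {s(i₀, i₁)} then ∏ i, #(P i)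
      else if K ≤ H then edgeCount G (P i₀) (P i₁) * ∏ i ∈ {i₀, i₁}ᶜ, #(P i)
      else 0 := by
  split_ifs with hKm hK
  · rw [homCount, filter_true_of_mem fun v hv => hsb.isHom_of_le_deleteEdges hKm hv,
      Fintype.card_piFinset]
  · have he : K.Adj i₀ i₁ := by
      obtain ⟨i, j, hKij, hm⟩ :
          ∃ i j, K.Adj i j ∧ ¬ (H.deleteEdges {s(i₀, i₁)}).Adj i j := by
        simpa [le_iff_adj] using hKm
      have hije : s(i, j) = s(i₀, i₁) := by
        simpa only [deleteEdges_adj, hK hKij, true_and, Set.mem_singleton_iff, not_not] using hm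
      rwa [← mem_edgeSet, ← hije]
    rw [homCount, filter_congr fun v hv => hsb.isHom_iff hK he hv, edgeCount,
      card_piFinset_filter_rel P hsb.1]
  · rw [homCount, card_eq_zero, filter_eq_empty_iff]
    exact fun v hv hom => hK (hsb.le_of_isHom hv hom)

theorem homCount_eq_add (hsb : IsSemiBlowup G H i₀ i₁ P) (K : SimpleGraph (Fin k)) :
    (homCount K G P : ℝ) =
      homCount K (H.deleteEdges {s(i₀, i₁)}) (fun i => {i}) * ∏ i, (#(P i) : ℝ) +
        (homCount K H (fun i => {i}) - homCount K (H.deleteEdges {s(i₀, i₁)}) (fun i => {i})) *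
          (edgeCount G (P i₀) (P i₁) * ∏ i ∈ {i₀, i₁}ᶜ, (#(P i) : ℝ)) := by
  rw [hsb.homCount_eq, homCount_singleton, homCount_singleton]
  by_cases hKm : K ≤ H.deleteEdges {s(i₀, i₁)}
  · simp [hKm, hKm.trans (deleteEdges_le _)]
  · by_cases hK : K ≤ H <;> simp [hKm, hK]

theorem nCopies_eq_add (hsb : IsSemiBlowup G H i₀ i₁ P) (K : SimpleGraph (Fin k)) :
    nCopies K G P =
      nCopies K (H.deleteEdges {s(i₀, i₁)}) (fun i => {i}) * ∏ i, (#(P i) : ℝ) +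
        (nCopies K H (fun i => {i}) - nCopies K (H.deleteEdges {s(i₀, i₁)}) (fun i => {i})) *
          (edgeCount G (P i₀) (P i₁) * ∏ i ∈ {i₀, i₁}ᶜ, (#(P i) : ℝ)) := by
  simp only [nCopies, labeledCount_eq_sum_homCount, Nat.cast_sum, hsb.homCount_eq_add,
    sum_add_distrib, ← sum_mul, sum_sub_distrib]
  ring

end IsSemiBlowup

theorem stmt9_general {k : ℕ} {V : Type*} (H F Hm : SimpleGraph (Fin k)) (i₀ i₁ : Fin k)
    (G : SimpleGraph V) (P : Fin k → Finset V)
    (hF : F ≤ H) (heF : ¬ F.Adj i₀ i₁)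
    (hHm : ∀ i j, Hm.Adj i j ↔
      (H.Adj i j ∧ ¬((i = i₀ ∧ j = i₁) ∨ (i = i₁ ∧ j = i₀))))
    (hsb : IsSemiBlowup G H i₀ i₁ P) :
    1 ≤ nCopies F Hm (fun i => {i}) ∧
    0 ≤ nCopies F H (fun i => {i}) - nCopies F Hm (fun i => {i}) ∧
    coeff H F G P = density G (P i₀) (P i₁) /
      (nCopies F Hm (fun i => {i}) +
        (nCopies F H (fun i => {i}) - nCopies F Hm (fun i => {i})) *
          density G (P i₀) (P i₁)) := by
  obtain rfl : Hm = H.deleteEdges {s(i₀, i₁)} := by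
    ext i j
    rw [hHm, deleteEdges_adj, Set.mem_singleton_iff, Sym2.eq_iff]
  have hHm_lt := deleteEdges_singleton_lt hsb.2.1
  refine ⟨nCopies_self F ▸ nCopies_mono F (le_deleteEdges_singleton hF heF) _,
    sub_nonneg.2 (nCopies_mono F hHm_lt.le _), ?_⟩
  have hcard : ∀ i, (#(P i) : ℝ) ≠ 0 := fun i => Nat.cast_ne_zero.2 (hsb.2.2.1 i).card_pos.ne'
  rw [coeff, hsb.nCopies_eq_add, hsb.nCopies_eq_add, nCopies_self, nCopies_eq_zero_of_lt hHm_lt,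
    density, ← prod_mul_prod_compl {i₀, i₁}, prod_pair hsb.1]
  field_simp [hcard i₀, hcard i₁, prod_ne_zero_iff.2 fun i _ => hcard i]
  ring

/-- The `(H,F)`-coefficient of a semi-blowup along `e ∈ E(H)\E(F)` with replacement
density `d` equals `d/(a + bd)`, where `a = n_F(H−e) ≥ 1` and `b = n_F(H) − n_F(H−e) ≥ 0`. -/
theorem stmt9 {k : ℕ} {V : Type*} (H F Hm : SimpleGraph (Fin k)) (i₀ i₁ : Fin k)
    (G : SimpleGraph V) (P : Fin k → Finset V)
    (hF : F ≤ H) (hFH : F ≠ H) (he : H.Adj i₀ i₁) (heF : ¬ F.Adj i₀ i₁)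
    (hHm : ∀ i j, Hm.Adj i j ↔
      (H.Adj i j ∧ ¬((i = i₀ ∧ j = i₁) ∨ (i = i₁ ∧ j = i₀))))
    (hsb : IsSemiBlowup G H i₀ i₁ P) :
    1 ≤ nCopies F Hm (fun i => {i}) ∧
    0 ≤ nCopies F H (fun i => {i}) - nCopies F Hm (fun i => {i}) ∧
    coeff H F G P = density G (P i₀) (P i₁) /
      (nCopies F Hm (fun i => {i}) +
        (nCopies F H (fun i => {i}) - nCopies F Hm (fun i => {i})) *
          density G (P i₀) (P i₁)) :=
  stmt9_general H F Hm i₀ i₁ G P hF heF hHm hsb
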